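/- arXiv:1907.12733 — 5 statements merged into one kernel-verified Lean document; each statement's English description precedes it below -/
import Mathlib

section
/- Let A be a weakly monotone allocation function on profiles of set functions on a task set M, and fix a partition (S,T) of M. Restrict attention to valuations t_i of player i that are additive across S and T, i.e., t_i(X) = t_i(X ∩ S) + t_i(X ∩ T) for all X ⊆ M. Then for any two such valuations of player i that agree on all subsets of T (with the other players' valuations fixed), the weak monotonicity inequality holds for the S-parts of the allocations: t_i(A_i ∩ S) − t'_i(A_i ∩ S) ≤ t_i(A'_i ∩ S) − t'_i(A'_i ∩ S), where A and A' are the allocations under t_i and t'_i respectively. -/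
/-- Restriction of a WMON allocation to a cut `(S,T)` of the task
set remains weakly monotone on the `S`-parts, for valuations of player `i` that
are additive across `S` and `T` and agree on all subsets of `T`. -/
theorem WMON_restriction {ι M : Type*} [DecidableEq ι]
    (A : (ι → (Set M → ℝ)) → ι → Set M)
    (hW : ∀ (i : ι) (b : ι → Set M → ℝ) (ti t'i : Set M → ℝ),
      ti (A (Function.update b i ti) i) - ti (A (Function.update b i t'i) i) ≤
        t'i (A (Function.update b i ti) i) - t'i (A (Function.update b i t'i) i))
    (S T : Set M) (hcover : S ∪ T = Set.univ) (hdisj : Disjoint S T)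
    (i : ι) (b : ι → Set M → ℝ) (ti t'i : Set M → ℝ)
    (haddi : ∀ X : Set M, ti X = ti (X ∩ S) + ti (X ∩ T))
    (haddi' : ∀ X : Set M, t'i X = t'i (X ∩ S) + t'i (X ∩ T))
    (hagree : ∀ Y : Set M, Y ⊆ T → ti Y = t'i Y) :
    ti (A (Function.update b i ti) i ∩ S) - t'i (A (Function.update b i ti) i ∩ S) ≤
      ti (A (Function.update b i t'i) i ∩ S) - t'i (A (Function.update b i t'i) i ∩ S) := by
  have h := hW i b ti t'i
  set X := A (Function.update b i ti) i
  set Y := A (Function.update b i t'i) i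
  have hX := haddi X; have hY := haddi Y
  have hX' := haddi' X; have hY' := haddi' Y
  have e1 : ti (X ∩ T) = t'i (X ∩ T) := hagree _ Set.inter_subset_right
  have e2 : ti (Y ∩ T) = t'i (Y ∩ T) := hagree _ Set.inter_subset_right
  rw [hX, hY, hX', hY', e1, e2] at h
  linarith
end

section
/- Let A be a weakly monotone allocation for additive valuations. Fix a bid vector t of additive valuations and let S = A_i(t) be the set of tasks assigned to player i. If t' = (t'_i, t_{-i}) is obtained by strictly decreasing player i's value on every task in S (t'_i({j}) < t_i({j}) for j ∈ S) and strictly increasing it on every task outside S (t'_i({j}) > t_i({j}) for j ∉ S), then A_i(t') = S. -/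
/-!
Weak monotonicity applied to the pair `t i`, `t'i` says that the allocated set `S` collects at
least as much of the difference `t i - t'i` as the new set `S'` does. That difference is positive
exactly on `S` and negative off it, so `S` is its unique maximiser among finite sets, forcing
`S' = S`.
-/

namespace Finset

theorem sum_lt_sum_of_pos_of_neg_compl {α : Type*} {f : α → ℝ} {S T : Finset α}
    (hpos : ∀ j ∈ S, 0 < f j) (hneg : ∀ j ∉ S, f j < 0) (hne : T ≠ S) :
    ∑ j ∈ T, f j < ∑ j ∈ S, f j := by
  classical
  have hT : ∑ j ∈ T, f j = ∑ j ∈ T ∩ S, f j + ∑ j ∈ T \ S, f j :=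
    (sum_inter_add_sum_sdiff T S f).symm
  have hS : ∑ j ∈ S, f j = ∑ j ∈ T ∩ S, f j + ∑ j ∈ S \ T, f j := by
    rw [inter_comm, sum_inter_add_sum_sdiff]
  have hout : ∑ j ∈ T \ S, f j ≤ 0 :=
    sum_nonpos fun j hj => (hneg j (mem_sdiff.mp hj).2).le
  have hin : 0 ≤ ∑ j ∈ S \ T, f j :=
    sum_nonneg fun j hj => (hpos j (mem_sdiff.mp hj).1).le
  rcases (T \ S).eq_empty_or_nonempty with hTS | hTS
  · have hST : (S \ T).Nonempty := by
      rw [nonempty_iff_ne_empty, Ne, sdiff_eq_empty_iff_subset]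
      exact fun h => hne (h.antisymm' (sdiff_eq_empty_iff_subset.mp hTS))
    have : 0 < ∑ j ∈ S \ T, f j := sum_pos (fun j hj => hpos j (mem_sdiff.mp hj).1) hST
    linarith
  · have : ∑ j ∈ T \ S, f j < 0 := sum_neg (fun j hj => hneg j (mem_sdiff.mp hj).2) hTS
    linarith

end Finset

theorem WMON_allocation_stable_general {ι M : Type*} [DecidableEq ι]
    (A : (ι → M → ℝ) → ι → Finset M)
    (hW : ∀ (i : ι) (b : ι → M → ℝ) (ti t'i : M → ℝ),
      (∑ j ∈ A (Function.update b i ti) i, ti j) -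
          (∑ j ∈ A (Function.update b i t'i) i, ti j) ≤
        (∑ j ∈ A (Function.update b i ti) i, t'i j) -
          (∑ j ∈ A (Function.update b i t'i) i, t'i j))
    (i : ι) (t : ι → M → ℝ) (t'i : M → ℝ)
    (hdec : ∀ j ∈ A t i, t'i j < t i j)
    (hinc : ∀ j ∉ A t i, t i j < t'i j) :
    A (Function.update t i t'i) i = A t i := by
  have hmon := hW i t (t i) t'i
  rw [Function.update_eq_self] at hmon
  by_contra hne
  have hlt := Finset.sum_lt_sum_of_pos_of_neg_compl (f := fun j => t i j - t'i j)
    (fun j hj => sub_pos.mpr (hdec j hj)) (fun j hj => sub_neg.mpr (hinc j hj)) hne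
  simp only [Finset.sum_sub_distrib] at hlt
  linarith

/-- For a WMON allocation on additive valuations, if player `i`
strictly decreases her value on every task she receives and strictly increases
it on every other task, her allocated set does not change. -/
theorem WMON_allocation_stable {ι M : Type*} [DecidableEq ι] [Fintype M] [DecidableEq M]
    (A : (ι → M → ℝ) → ι → Finset M)
    (hW : ∀ (i : ι) (b : ι → M → ℝ) (ti t'i : M → ℝ),
      (∑ j ∈ A (Function.update b i ti) i, ti j) -
          (∑ j ∈ A (Function.update b i t'i) i, ti j) ≤
        (∑ j ∈ A (Function.update b i ti) i, t'i j) -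
          (∑ j ∈ A (Function.update b i t'i) i, t'i j))
    (i : ι) (t : ι → M → ℝ) (t'i : M → ℝ)
    (hdec : ∀ j ∈ A t i, t'i j < t i j)
    (hinc : ∀ j ∉ A t i, t i j < t'i j) :
    A (Function.update t i t'i) i = A t i :=
  WMON_allocation_stable_general A hW i t t'i hdec hinc
end

section
/- Let a < b and let φ, η : (a,b) → ℝ be functions such that φ(t_1) + η(t_{12} − t_1) = η(t_2) + φ(t_{12} − t_2) holds for all triples (t_1, t_2, t_{12}) with t_1, t_2, t_{12}−t_1, t_{12}−t_2 in (a,b) and t_{12} in (t_1+t_2−ε, t_1+t_2] for every such pair (t_1, t_2). If φ and η are nondecreasing, then φ and η are affine functions with the same slope on their common domain. -/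
lemma chain_aux (a b u c : ℝ) (ψ : ℝ → ℝ) (hu : 0 < u)
    (hstep : ∀ x δ : ℝ, x ∈ Set.Ioo a b → x + δ ∈ Set.Ioo a b → 0 ≤ δ → δ ≤ u →
      ψ (x + δ) = ψ x + c * δ) :
    ∀ x y : ℝ, x ∈ Set.Ioo a b → y ∈ Set.Ioo a b → x ≤ y → ψ y = ψ x + c * (y - x) := by
  intro x y hx hy hxy
  obtain ⟨n, hn⟩ := exists_nat_ge ((y - x) / u)
  set N : ℕ := n + 1 with hN
  have hN0 : (0:ℝ) < (N:ℝ) := by positivity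
  set s : ℝ := (y - x) / N with hs
  have hNs : (N:ℝ) * s = y - x := by rw [hs]; field_simp
  have hs0 : 0 ≤ s := div_nonneg (by linarith) hN0.le
  have hsu : s ≤ u := by
    rw [hs, div_le_iff₀ hN0]
    have h1 : y - x ≤ n * u := by
      have := (div_le_iff₀ hu).1 hn; linarith
    have h2 : (n:ℝ) ≤ (N:ℝ) := by rw [hN]; push_cast; linarith
    nlinarith
  have hbound : ∀ j : ℕ, j ≤ N → x + j * s ∈ Set.Ioo a b := by
    intro j hj
    have hjs : (j:ℝ) * s ≤ (N:ℝ) * s := by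
      apply mul_le_mul_of_nonneg_right _ hs0
      exact_mod_cast hj
    constructor
    · have : 0 ≤ (j:ℝ) * s := by positivity
      linarith [hx.1]
    · rw [hNs] at hjs; linarith [hy.2]
  have key : ∀ k : ℕ, k ≤ N → ψ (x + k * s) = ψ x + c * (k * s) := by
    intro k hk
    induction k with
    | zero => simp
    | succ k ih =>
      have hk' : k ≤ N := Nat.le_of_succ_le hk
      have h1 : x + (k:ℝ) * s + s = x + ((k+1 : ℕ):ℝ) * s := by push_cast; ring
      have := hstep (x + k * s) s (hbound k hk') (by rw [h1]; exact hbound (k+1) hk) hs0 hsu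
      rw [h1] at this
      rw [this, ih hk']
      push_cast; ring
  have := key N le_rfl
  rw [hNs, show x + (y - x) = y by ring] at this
  exact this

set_option maxHeartbeats 1600000 in
/-- If nondecreasing `φ, η` satisfy the functional equation
`φ(t₁) + η(t₁₂ − t₁) = η(t₂) + φ(t₁₂ − t₂)` for all valid triples with
`t₁₂ ∈ (t₁+t₂−ε, t₁+t₂]`, then `φ` and `η` are affine with the same slope. -/
theorem functional_equation_affine (a b ε : ℝ) (hab : a < b) (hε : 0 < ε)
    (φ η : ℝ → ℝ)
    (hφ : MonotoneOn φ (Set.Ioo a b)) (hη : MonotoneOn η (Set.Ioo a b))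
    (heq : ∀ t1 t2 t12 : ℝ, t1 ∈ Set.Ioo a b → t2 ∈ Set.Ioo a b →
      t12 - t1 ∈ Set.Ioo a b → t12 - t2 ∈ Set.Ioo a b →
      t12 ∈ Set.Ioc (t1 + t2 - ε) (t1 + t2) →
      φ t1 + η (t12 - t1) = η t2 + φ (t12 - t2)) :
    ∃ c d e : ℝ, (∀ x ∈ Set.Ioo a b, φ x = c * x + d) ∧
      (∀ x ∈ Set.Ioo a b, η x = c * x + e) := by
  obtain ⟨u, hu_def⟩ : ∃ u : ℝ, u = min ε (b - a) / 8 := ⟨_, rfl⟩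
  have hu : 0 < u := by
    have : 0 < min ε (b - a) := lt_min hε (by linarith)
    rw [hu_def]; linarith
  have h2uε : 2 * u < ε := by
    have := min_le_left ε (b - a); rw [hu_def]; linarith
  have h2uba : 2 * u < (b - a) / 2 := by
    have := min_le_right ε (b - a); rw [hu_def]; linarith
  obtain ⟨m, hm_def⟩ : ∃ m : ℝ, m = (a + b) / 2 := ⟨_, rfl⟩
  have hm : m ∈ Set.Ioo a b := ⟨by rw [hm_def]; linarith, by rw [hm_def]; linarith⟩
  have hmem : ∀ δ : ℝ, 0 ≤ δ → δ ≤ 2 * u → m + δ ∈ Set.Ioo a b := by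
    intro δ h0 h2
    constructor
    · have := hm.1; linarith
    · rw [hm_def]; linarith
  -- Step lemma: φ-increment at x equals η-increment at y.
  have hstep0 : ∀ x y δ : ℝ, x ∈ Set.Ioo a b → x + δ ∈ Set.Ioo a b →
      y ∈ Set.Ioo a b → y + δ ∈ Set.Ioo a b → 0 ≤ δ → δ < ε →
      φ (x + δ) - φ x = η (y + δ) - η y := by
    intro x y δ hx hxδ hy hyδ h0 hδε
    have h := heq (x + δ) (y + δ) (x + y + δ)
      hxδ hyδ
      (by rw [show x + y + δ - (x + δ) = y by ring]; exact hy)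
      (by rw [show x + y + δ - (y + δ) = x by ring]; exact hx)
      (Set.mem_Ioc.mpr ⟨by linarith, by linarith⟩)
    rw [show x + y + δ - (x + δ) = y by ring, show x + y + δ - (y + δ) = x by ring] at h
    linarith
  -- Increment independence: φ-increment equals the increment at the midpoint.
  have hφinc : ∀ x δ : ℝ, x ∈ Set.Ioo a b → x + δ ∈ Set.Ioo a b → 0 ≤ δ → δ ≤ 2 * u →
      φ (x + δ) - φ x = φ (m + δ) - φ m := by
    intro x δ hx hxδ h0 h2
    have hmδ : m + δ ∈ Set.Ioo a b := hmem δ h0 h2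
    have h1 := hstep0 x m δ hx hxδ hm hmδ h0 (by linarith)
    have h2' := hstep0 m m δ hm hmδ hm hmδ h0 (by linarith)
    linarith
  have hηinc : ∀ y δ : ℝ, y ∈ Set.Ioo a b → y + δ ∈ Set.Ioo a b → 0 ≤ δ → δ ≤ 2 * u →
      η (y + δ) - η y = φ (m + δ) - φ m := by
    intro y δ hy hyδ h0 h2
    have hmδ : m + δ ∈ Set.Ioo a b := hmem δ h0 h2
    have h1 := hstep0 m y δ hm hmδ hy hyδ h0 (by linarith)
    linarith [hφinc m δ hm hmδ h0 h2]
  -- Additivity of g δ := φ(m+δ) − φ m for nat multiples.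
  have hnat : ∀ n : ℕ, ∀ δ : ℝ, 0 ≤ δ → (n:ℝ) * δ ≤ 2 * u →
      φ (m + n * δ) - φ m = n * (φ (m + δ) - φ m) := by
    intro n
    induction n with
    | zero => intro δ _ _; simp
    | succ n ih =>
      intro δ h0 hn1
      have hnδ : (n:ℝ) * δ ≤ 2 * u := by
        have : (n:ℝ) * δ ≤ (n+1:ℝ) * δ := by nlinarith
        push_cast at hn1 ⊢; linarith
      have hmnδ : m + n * δ ∈ Set.Ioo a b := hmem _ (by positivity) hnδ
      have hmn1δ : m + (n:ℝ) * δ + δ ∈ Set.Ioo a b := by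
        rw [show m + (n:ℝ) * δ + δ = m + ((n:ℝ) * δ + δ) by ring]
        apply hmem _ (by positivity)
        push_cast at hn1; linarith
      have hinc := hφinc (m + n * δ) δ hmnδ hmn1δ h0 (by push_cast at hn1; nlinarith)
      have hih := ih δ h0 hnδ
      rw [show m + ((n:ℕ)+1 : ℕ) * δ = m + (n:ℝ) * δ + δ by push_cast; ring]
      push_cast
      linarith
  -- Rational multiples of u.
  have hrat : ∀ q : ℚ, 0 ≤ q → q ≤ 1 →
      φ (m + (q:ℝ) * u) - φ m = (q:ℝ) * (φ (m + u) - φ m) := by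
    intro q hq0 hq1
    set nn : ℕ := q.num.toNat with hnn
    set dd : ℕ := q.den with hdd
    have hdd0 : (0:ℝ) < (dd:ℝ) := by
      have := q.den_pos; rw [hdd]; exact_mod_cast this
    have hqcast : (q:ℝ) = (nn:ℝ) / (dd:ℝ) := by
      rw [Rat.cast_def, hnn, hdd]
      congr 1
      exact_mod_cast (Int.toNat_of_nonneg (Rat.num_nonneg.mpr hq0)).symm
    have hnd : (nn:ℝ) ≤ (dd:ℝ) := by
      have hle : (q:ℝ) ≤ 1 := by exact_mod_cast hq1
      rw [hqcast, div_le_one hdd0] at hle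
      linarith
    have hud : 0 ≤ u / dd := div_nonneg hu.le hdd0.le
    have h1 : φ (m + (nn:ℝ) * (u / dd)) - φ m = nn * (φ (m + u / dd) - φ m) := by
      apply hnat nn (u / dd) hud
      calc (nn:ℝ) * (u / dd) ≤ (dd:ℝ) * (u / dd) := by
            apply mul_le_mul_of_nonneg_right hnd hud
        _ = u := by field_simp
        _ ≤ 2 * u := by linarith
    have h2 : φ (m + (dd:ℝ) * (u / dd)) - φ m = dd * (φ (m + u / dd) - φ m) := by
      apply hnat dd (u / dd) hud
      calc (dd:ℝ) * (u / dd) = u := by field_simp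
        _ ≤ 2 * u := by linarith
    rw [show (dd:ℝ) * (u / dd) = u by field_simp] at h2
    rw [show (q:ℝ) * u = (nn:ℝ) * (u / dd) by rw [hqcast]; field_simp]
    rw [h1, hqcast, h2]
    field_simp
  -- The slope
  obtain ⟨G, hG_def⟩ : ∃ G : ℝ, G = φ (m + u) - φ m := ⟨_, rfl⟩
  rw [← hG_def] at hrat
  have hmu : m + u ∈ Set.Ioo a b := hmem u hu.le (by linarith)
  have hG0 : 0 ≤ G := by
    have := hφ hm hmu (by linarith)
    rw [hG_def]; linarith
  obtain ⟨c, hc_def⟩ : ∃ c : ℝ, c = G / u := ⟨_, rfl⟩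
  have hgmono : ∀ δ1 δ2 : ℝ, 0 ≤ δ1 → δ1 ≤ δ2 → δ2 ≤ 2 * u →
      φ (m + δ1) ≤ φ (m + δ2) := by
    intro δ1 δ2 h1 h12 h2
    exact hφ (hmem δ1 h1 (by linarith)) (hmem δ2 (by linarith) h2) (by linarith)
  -- Squeeze: linearity on [0, u].
  have hlin : ∀ δ : ℝ, 0 ≤ δ → δ ≤ u → φ (m + δ) - φ m = c * δ := by
    intro δ h0 hδu
    obtain ⟨t, ht_def⟩ : ∃ t : ℝ, t = δ / u := ⟨_, rfl⟩
    have ht0 : 0 ≤ t := by rw [ht_def]; exact div_nonneg h0 hu.le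
    have ht1 : t ≤ 1 := by rw [ht_def, div_le_one hu]; exact hδu
    have htu : t * u = δ := by rw [ht_def]; field_simp
    have hcδ : c * δ = G * t := by rw [hc_def, ht_def]; field_simp
    rw [hcδ]
    have hεG : ∀ s : ℝ, 0 < s → 0 ≤ s / (G + 1) ∧ (s / (G + 1)) * (G + 1) = s := by
      intro s hs
      constructor
      · positivity
      · field_simp
    apply le_antisymm
    · apply le_of_forall_pos_le_add
      intro ε' hε'
      rcases eq_or_lt_of_le ht1 with h | h
      · -- t = 1, δ = u
        have : δ = u := by rw [← htu, h, one_mul]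
        rw [this, ← hG_def]
        nlinarith
      · obtain ⟨hs0, hs1⟩ := hεG ε' hε'
        obtain ⟨q, hq1, hq2⟩ := exists_rat_btwn
          (show t < min 1 (t + ε' / (G + 1)) by
            rcases eq_or_lt_of_le hs0 with h' | h'
            · exfalso; rw [← h'] at hs1; simp at hs1; linarith
            · exact lt_min h (by linarith))
        have hq0 : (0:ℚ) ≤ q := by
          have : (0:ℝ) < (q:ℝ) := lt_of_le_of_lt ht0 hq1
          exact_mod_cast this.le
        have hq1' : (q:ℚ) ≤ 1 := by
          have : (q:ℝ) ≤ 1 := le_of_lt (lt_of_lt_of_le hq2 (min_le_left _ _))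
          exact_mod_cast this
        have hq1'' : (q:ℝ) ≤ 1 := by exact_mod_cast hq1'
        have hmono := hgmono δ ((q:ℝ) * u) h0
          (by nlinarith [mul_lt_mul_of_pos_right hq1 hu])
          (by nlinarith [mul_le_mul_of_nonneg_right hq1'' hu.le])
        have hr := hrat q hq0 hq1'
        have hqle : (q:ℝ) ≤ t + ε' / (G + 1) :=
          le_of_lt (lt_of_lt_of_le hq2 (min_le_right _ _))
        have h1 : (q:ℝ) * G ≤ (t + ε' / (G + 1)) * G :=
          mul_le_mul_of_nonneg_right hqle hG0
        have hexp : (t + ε' / (G + 1)) * G = t * G + (ε' - ε' / (G + 1)) := by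
          linear_combination hs1
        linarith
    · apply le_of_forall_pos_le_add
      intro ε' hε'
      rcases eq_or_lt_of_le ht0 with h | h
      · -- t = 0, δ = 0
        have hδ0 : δ = 0 := by rw [← htu, ← h, zero_mul]
        have : φ m ≤ φ (m + δ) := by
          have := hgmono 0 δ le_rfl h0 (by linarith)
          rw [add_zero] at this; exact this
        nlinarith
      · obtain ⟨hs0, hs1⟩ := hεG ε' hε'
        obtain ⟨q, hq1, hq2⟩ := exists_rat_btwn
          (show max 0 (t - ε' / (G + 1)) < t by
            apply max_lt h
            rcases eq_or_lt_of_le hs0 with h' | h'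
            · exfalso; rw [← h'] at hs1; simp at hs1; linarith
            · linarith)
        have hq0 : (0:ℚ) ≤ q := by
          have : (0:ℝ) ≤ (q:ℝ) := le_of_lt (lt_of_le_of_lt (le_max_left _ _) hq1)
          exact_mod_cast this
        have hq1' : (q:ℚ) ≤ 1 := by
          have : (q:ℝ) ≤ 1 := le_of_lt (lt_of_lt_of_le hq2 ht1)
          exact_mod_cast this
        have hq0' : (0:ℝ) ≤ (q:ℝ) := by exact_mod_cast hq0
        have hmono := hgmono ((q:ℝ) * u) δ (mul_nonneg hq0' hu.le)
          (by nlinarith [mul_lt_mul_of_pos_right hq2 hu]) (by linarith)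
        have hr := hrat q hq0 hq1'
        have hqge : t - ε' / (G + 1) ≤ (q:ℝ) :=
          le_of_lt (lt_of_le_of_lt (le_max_right _ _) hq1)
        have h1 : (t - ε' / (G + 1)) * G ≤ (q:ℝ) * G :=
          mul_le_mul_of_nonneg_right hqge hG0
        have hexp : (t - ε' / (G + 1)) * G = t * G - ε' + ε' / (G + 1) := by
          linear_combination -hs1
        linarith
  -- Step lemmas with exact slope.
  have hφstep : ∀ x δ : ℝ, x ∈ Set.Ioo a b → x + δ ∈ Set.Ioo a b → 0 ≤ δ → δ ≤ u →
      φ (x + δ) = φ x + c * δ := by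
    intro x δ hx hxδ h0 hδu
    have := hφinc x δ hx hxδ h0 (by linarith)
    rw [hlin δ h0 hδu] at this
    linarith
  have hηstep : ∀ x δ : ℝ, x ∈ Set.Ioo a b → x + δ ∈ Set.Ioo a b → 0 ≤ δ → δ ≤ u →
      η (x + δ) = η x + c * δ := by
    intro x δ hx hxδ h0 hδu
    have := hηinc x δ hx hxδ h0 (by linarith)
    rw [hlin δ h0 hδu] at this
    linarith
  have hchainφ := chain_aux a b u c φ hu hφstep
  have hchainη := chain_aux a b u c η hu hηstep
  refine ⟨c, φ m - c * m, η m - c * m, ?_, ?_⟩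
  · intro x hx
    rcases le_total m x with h | h
    · have := hchainφ m x hm hx h
      rw [this]; ring
    · have := hchainφ x m hx hm h
      rw [show φ x = φ m - c * (m - x) by linarith]; ring
  · intro x hx
    rcases le_total m x with h | h
    · have := hchainη m x hm hx h
      rw [this]; ring
    · have := hchainη x m hx hm h
      rw [show η x = η m - c * (m - x) by linarith]; ring
end

section
/- Let (A, P̂) be a truthful mechanism for one player with a monotone normalized valuation t = (t_1, t_2, t_{12}) on two tasks (the other player's bid s fixed), with P̂_∅ = 0 and the region R_∅ of bids receiving no task nonempty. Define virtual payments P_∅ = 0, P_1 = max(P̂_1, 0), P_2 = max(P̂_2, 0), P_{12} = max(P̂_{12}, P_1, P_2). Then (A, P) is also truthful: for every bid t, the realized allocation α = A(t) maximizes P_β − t_β over β ∈ {12, 1, 2, ∅}. -/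
/-- The domain of monotone normalized valuations on two tasks. -/
def Vmono (t : Finset (Fin 2) → ℝ) : Prop :=
  t ∅ = 0 ∧ (∀ α β : Finset (Fin 2), α ⊆ β → t α ≤ t β) ∧ ∀ α, 0 ≤ t α

lemma finset2_cases : ∀ s : Finset (Fin 2), s = ∅ ∨ s = {0} ∨ s = {1} ∨ s = ({0, 1} : Finset (Fin 2)) := by decide

/-- If `(A, P̂)` is truthful for one player with monotone
normalized valuations on two tasks, `P̂_∅ = 0`, and the no-task region is
nonempty, then the mechanism with the virtual payments
`P_∅ = 0, P_1 = max(P̂_1,0), P_2 = max(P̂_2,0), P_{12} = max(P̂_{12},P_1,P_2)`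
is also truthful. -/
theorem virtual_payments_truthful
    (A : (Finset (Fin 2) → ℝ) → Finset (Fin 2))
    (Phat : Finset (Fin 2) → ℝ)
    (hPhat0 : Phat ∅ = 0)
    (htruth : ∀ t, Vmono t → ∀ β : Finset (Fin 2),
      Phat β - t β ≤ Phat (A t) - t (A t))
    (hne : ∃ t, Vmono t ∧ A t = ∅)
    (P : Finset (Fin 2) → ℝ)
    (hP0 : P ∅ = 0)
    (hP1 : P {0} = max (Phat {0}) 0)
    (hP2 : P {1} = max (Phat {1}) 0)
    (hP12 : P {0, 1} = max (Phat {0, 1}) (max (P {0}) (P {1}))) :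
    ∀ t, Vmono t → ∀ β : Finset (Fin 2), P β - t β ≤ P (A t) - t (A t) := by

  intro t ht β
  obtain ⟨h0, hmono, hnn⟩ := ht
  have key : ∀ γ, Phat γ - t γ ≤ Phat (A t) - t (A t) := htruth t ⟨h0, hmono, hnn⟩
  have hz : 0 ≤ Phat (A t) - t (A t) := by have := key ∅; rw [hPhat0, h0] at this; linarith
  -- every P γ - t γ ≤ Phat (A t) - t (A t)
  have hmain : ∀ γ : Finset (Fin 2), P γ - t γ ≤ Phat (A t) - t (A t) := by
    intro γ
    have hcases := finset2_cases γ
    have h1le : P {0} - t {0} ≤ Phat (A t) - t (A t) := by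
      rw [hP1]; rcases max_cases (Phat {0}) (0:ℝ) with ⟨h, _⟩ | ⟨h, _⟩ <;> rw [h]
      · exact key {0}
      · have := hnn {0}; linarith
    have h2le : P {1} - t {1} ≤ Phat (A t) - t (A t) := by
      rw [hP2]; rcases max_cases (Phat {1}) (0:ℝ) with ⟨h, _⟩ | ⟨h, _⟩ <;> rw [h]
      · exact key {1}
      · have := hnn {1}; linarith
    rcases hcases with h | h | h | h <;> rw [h]
    · rw [hP0, h0]; linarith
    · exact h1le
    · exact h2le
    · rw [hP12]
      have hm1 : t {0} ≤ t {0, 1} := hmono _ _ (by decide)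
      have hm2 : t {1} ≤ t {0, 1} := hmono _ _ (by decide)
      rcases max_cases (Phat {0, 1}) (max (P {0}) (P {1})) with ⟨h', _⟩ | ⟨h', _⟩ <;> rw [h']
      · exact key {0, 1}
      · rcases max_cases (P {0}) (P {1}) with ⟨h'', _⟩ | ⟨h'', _⟩ <;> rw [h''] <;> linarith
  have hPge : Phat (A t) ≤ P (A t) := by
    have hcases := finset2_cases (A t)
    rcases hcases with h | h | h | h <;> rw [h]
    · rw [hP0, hPhat0]
    · rw [hP1]; exact le_max_left _ _
    · rw [hP2]; exact le_max_left _ _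
    · rw [hP12]; exact le_max_left _ _
  calc P β - t β ≤ Phat (A t) - t (A t) := hmain β
    _ ≤ P (A t) - t (A t) := by linarith
end

section
/- Let A be a truthful single-player allocation on the domain V of all monotone normalized valuations (t_1, t_2, t_{12}) on two tasks, with the no-task region nonempty. Then there is a unique payment vector (P_∅, P_1, P_2, P_{12}) that is normalized (P_∅ = 0), monotone (P_∅ ≤ P_1, P_2 ≤ P_{12}), and truthful for A (A(t) maximizes P_β − t_β for all t). Moreover these payments determine A up to ties. -/
lemma fin2cases (β : Finset (Fin 2)) : β = ∅ ∨ β = {0} ∨ β = {1} ∨ β = {0,1} := by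
  revert β; decide

/-- threshold valuation for the singleton {i}. -/
def tsti (i : Fin 2) (c M : ℝ) : Finset (Fin 2) → ℝ :=
  fun γ => if γ = ∅ then 0 else if γ = {i} then c else M

lemma tsti_vmono (i : Fin 2) (c M : ℝ) (hc : 0 ≤ c) (hcM : c ≤ M) :
    Vmono (tsti i c M) := by
  fin_cases i <;>
  · refine ⟨by simp [tsti], ?_, ?_⟩
    · intro α β hsub
      rcases fin2cases α with h|h|h|h <;> rcases fin2cases β with h'|h'|h'|h' <;>
        subst h <;> subst h' <;>
        first
          | (exfalso; revert hsub; decide)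
          | (norm_num [tsti, show (({0,1} : Finset (Fin 2)) = {0}) ↔ False from by decide,
              show (({0,1} : Finset (Fin 2)) = {1}) ↔ False from by decide,
              show (({0,1} : Finset (Fin 2)) = ∅) ↔ False from by decide,
              show (({1} : Finset (Fin 2)) = {0}) ↔ False from by decide,
              show (({0} : Finset (Fin 2)) = {1}) ↔ False from by decide,
              show (({1} : Finset (Fin 2)) = ∅) ↔ False from by decide,
              show (({0} : Finset (Fin 2)) = ∅) ↔ False from by decide] <;> linarith)
    · intro α
      simp only [tsti]
      split_ifs <;> linarith

lemma tsti_self (i : Fin 2) (c M : ℝ) : tsti i c M {i} = c := by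
  fin_cases i <;> simp [tsti]

lemma tsti_empty (i : Fin 2) (c M : ℝ) : tsti i c M ∅ = 0 := by simp [tsti]

lemma tsti_other (i : Fin 2) (c M : ℝ) (γ : Finset (Fin 2)) (h1 : γ ≠ ∅) (h2 : γ ≠ {i}) :
    tsti i c M γ = M := by simp [tsti, h1, h2]

/-- flat threshold valuation. -/
def tall (c : ℝ) : Finset (Fin 2) → ℝ := fun γ => if γ = ∅ then 0 else c

lemma tall_vmono (c : ℝ) (hc : 0 ≤ c) : Vmono (tall c) := by
  refine ⟨by simp [tall], ?_, ?_⟩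
  · intro α β hsub
    by_cases h : α = ∅
    · subst h; simp only [tall, if_pos rfl]
      split_ifs <;> linarith
    · have hβ : β ≠ ∅ := fun hb => h (Finset.subset_empty.mp (hb ▸ hsub))
      simp [tall, h, hβ]
  · intro α; simp only [tall]; split_ifs <;> linarith

lemma uniq_le (A : (Finset (Fin 2) → ℝ) → Finset (Fin 2))
    (P P' : Finset (Fin 2) → ℝ)
    (hP0 : P ∅ = 0) (hPm : ∀ β α : Finset (Fin 2), β ⊆ α → P β ≤ P α)
    (hPt : ∀ t, Vmono t → ∀ β : Finset (Fin 2), P β - t β ≤ P (A t) - t (A t))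
    (hP'0 : P' ∅ = 0) (hP'm : ∀ β α : Finset (Fin 2), β ⊆ α → P' β ≤ P' α)
    (hP't : ∀ t, Vmono t → ∀ β : Finset (Fin 2), P' β - t β ≤ P' (A t) - t (A t)) :
    ∀ β, P β ≤ P' β := by
  have hsing : ∀ i : Fin 2, P {i} ≤ P' {i} := by
    intro i
    by_contra h
    push_neg at h
    set c : ℝ := (P' {i} + P {i}) / 2 with hcdef
    have hc0 : (0:ℝ) ≤ P' {i} := hP'0 ▸ hP'm ∅ {i} (Finset.empty_subset _)
    have hc : 0 ≤ c := by simp only [hcdef]; linarith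
    have hclt : P' {i} < c := by simp only [hcdef]; linarith
    have hcgt : c < P {i} := by simp only [hcdef]; linarith
    set M : ℝ := max c (P' {0,1}) + 1 with hMdef
    have hcM : c ≤ M := le_trans (le_max_left _ _) (by linarith [le_refl (max c (P' {0,1}))])
    have hMbig : P' {0,1} < M := lt_of_le_of_lt (le_max_right c _)
      (by linarith [le_refl (max c (P' {0,1}))])
    have hM0 : P' {(0:Fin 2)} < M := lt_of_le_of_lt (hP'm {0} {0,1} (by decide)) hMbig
    have hM1 : P' {(1:Fin 2)} < M := lt_of_le_of_lt (hP'm {1} {0,1} (by decide)) hMbig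
    have ht : Vmono (tsti i c M) := tsti_vmono i c M hc hcM
    rcases fin2cases (A (tsti i c M)) with hA|hA|hA|hA
    · have := hPt (tsti i c M) ht {i}
      rw [hA, tsti_empty, hP0, tsti_self] at this
      linarith
    · have := hP't (tsti i c M) ht ∅
      rw [hA, tsti_empty, hP'0] at this
      by_cases hi : ({(0:Fin 2)} : Finset (Fin 2)) = {i}
      · rw [hi, tsti_self] at this
        rw [← hi] at hclt
        linarith
      · rw [tsti_other i c M _ (by decide) hi] at this
        linarith
    · have := hP't (tsti i c M) ht ∅
      rw [hA, tsti_empty, hP'0] at this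
      by_cases hi : ({(1:Fin 2)} : Finset (Fin 2)) = {i}
      · rw [hi, tsti_self] at this
        rw [← hi] at hclt
        linarith
      · rw [tsti_other i c M _ (by decide) hi] at this
        linarith
    · have := hP't (tsti i c M) ht ∅
      rw [hA, tsti_empty, hP'0,
        tsti_other i c M _ (by decide) (by fin_cases i <;> decide)] at this
      linarith
  intro β
  rcases fin2cases β with h|h|h|h <;> subst h
  · rw [hP0, hP'0]
  · exact hsing 0
  · exact hsing 1
  · by_contra h
    push_neg at h
    set c : ℝ := (P' {0,1} + P {0,1}) / 2 with hcdef
    have hc0 : (0:ℝ) ≤ P' {0,1} := hP'0 ▸ hP'm ∅ {0,1} (Finset.empty_subset _)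
    have hc : 0 ≤ c := by simp only [hcdef]; linarith
    have hclt : P' {0,1} < c := by simp only [hcdef]; linarith
    have hcgt : c < P {0,1} := by simp only [hcdef]; linarith
    have ht : Vmono (tall c) := tall_vmono c hc
    have hte : tall c ∅ = 0 := by simp [tall]
    have htc : ∀ γ : Finset (Fin 2), γ ≠ ∅ → tall c γ = c := by
      intro γ h1; simp [tall, h1]
    have hallle : ∀ γ : Finset (Fin 2), P' γ ≤ P' {0,1} := by
      intro γ
      exact hP'm γ {0,1} (by rcases fin2cases γ with h|h|h|h <;> subst h <;> decide)
    rcases fin2cases (A (tall c)) with hA|hA|hA|hA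
    · have := hPt (tall c) ht {0,1}
      rw [hA, hte, hP0, htc _ (by decide)] at this
      linarith
    all_goals {
      have h2 := hP't (tall c) ht ∅
      rw [hA, hte, hP'0, htc _ (by decide)] at h2
      first
        | linarith [hallle ({0} : Finset (Fin 2))]
        | linarith [hallle ({1} : Finset (Fin 2))]
        | linarith [hallle ({0,1} : Finset (Fin 2))]
    }

/-- candidate payment: monotone envelope of a shifted truthful payment. -/
noncomputable def Pcand (P0 : Finset (Fin 2) → ℝ) (β : Finset (Fin 2)) : ℝ :=
  β.powerset.sup' (Finset.powerset_nonempty β) (fun γ => P0 γ - P0 ∅)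

lemma le_Pcand (P0 : Finset (Fin 2) → ℝ) {γ β : Finset (Fin 2)} (h : γ ⊆ β) :
    P0 γ - P0 ∅ ≤ Pcand P0 β := by
  unfold Pcand
  exact Finset.le_sup' (fun γ => P0 γ - P0 ∅) (Finset.mem_powerset.mpr h)

lemma Pcand_empty (P0 : Finset (Fin 2) → ℝ) : Pcand P0 ∅ = 0 := by
  simp [Pcand]

lemma Pcand_mono (P0 : Finset (Fin 2) → ℝ) :
    ∀ β α : Finset (Fin 2), β ⊆ α → Pcand P0 β ≤ Pcand P0 α := by
  intro β α hsub
  apply Finset.sup'_le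
  intro γ hγ
  exact le_Pcand P0 (le_trans (Finset.mem_powerset.mp hγ) hsub)

/-- A truthful single-player allocation on the domain of all
monotone normalized valuations on two tasks, with nonempty no-task region, has
a unique normalized monotone truthful payment vector; moreover these payments
determine the allocation up to ties. -/
theorem unique_virtual_payments
    (A : (Finset (Fin 2) → ℝ) → Finset (Fin 2))
    (htruthful : ∃ P0 : Finset (Fin 2) → ℝ, ∀ t, Vmono t →
      ∀ β : Finset (Fin 2), P0 β - t β ≤ P0 (A t) - t (A t))
    (hne : ∃ t, Vmono t ∧ A t = ∅) :
    (∃! P : Finset (Fin 2) → ℝ,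
      P ∅ = 0 ∧ (∀ β α : Finset (Fin 2), β ⊆ α → P β ≤ P α) ∧
      ∀ t, Vmono t → ∀ β : Finset (Fin 2), P β - t β ≤ P (A t) - t (A t)) ∧
    (∀ P : Finset (Fin 2) → ℝ,
      (P ∅ = 0 ∧ (∀ β α : Finset (Fin 2), β ⊆ α → P β ≤ P α) ∧
        ∀ t, Vmono t → ∀ β : Finset (Fin 2), P β - t β ≤ P (A t) - t (A t)) →
      ∀ A' : (Finset (Fin 2) → ℝ) → Finset (Fin 2),
        (∀ t, Vmono t → ∀ β : Finset (Fin 2), P β - t β ≤ P (A' t) - t (A' t)) →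
        ∀ t, Vmono t → P (A' t) - t (A' t) = P (A t) - t (A t)) := by
  obtain ⟨P0, htr⟩ := htruthful
  have hPct : ∀ t, Vmono t → ∀ β : Finset (Fin 2),
      Pcand P0 β - t β ≤ Pcand P0 (A t) - t (A t) := by
    intro t ht β
    obtain ⟨γ, hγ, heq⟩ := Finset.exists_mem_eq_sup'
      (Finset.powerset_nonempty β) (fun γ => P0 γ - P0 ∅)
    have h1 : Pcand P0 β = P0 γ - P0 ∅ := heq
    have h2 : t γ ≤ t β := ht.2.1 γ β (Finset.mem_powerset.mp hγ)
    have h3 : P0 γ - t γ ≤ P0 (A t) - t (A t) := htr t ht γ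
    have h4 : P0 (A t) - P0 ∅ ≤ Pcand P0 (A t) := le_Pcand P0 (le_refl _)
    rw [h1]
    linarith
  constructor
  · refine ⟨Pcand P0, ⟨Pcand_empty P0, Pcand_mono P0, hPct⟩, ?_⟩
    intro P ⟨h0, hm, htt⟩
    funext β
    exact le_antisymm (uniq_le A P (Pcand P0) h0 hm htt (Pcand_empty P0) (Pcand_mono P0) hPct β)
      (uniq_le A (Pcand P0) P (Pcand_empty P0) (Pcand_mono P0) hPct h0 hm htt β)
  · intro P ⟨h0, hm, htt⟩ A' hA' t ht
    exact le_antisymm (htt t ht (A' t)) (hA' t ht (A t))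
end
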